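/- The upwind scheme is total variation diminishing (TVD) for 0 ≤ λ ≤ 1: for a sequence with finite total variation, ∑_j |Ua_{j+1} - Ua_j| ≤ ∑_j |a_{j+1} - a_j|, where Ua_j = a_j - λ(a_j - a_{j-1}). -/
import Mathlib
set_option maxHeartbeats 1000000 in

theorem stmt_16 (a : ℤ → ℝ) (lam : ℝ) (h0 : 0 ≤ lam) (h1 : lam ≤ 1)
    (hsum : Summable fun j : ℤ => |a (j + 1) - a j|)
    (Ua : ℤ → ℝ) (hUa : ∀ j, Ua j = a j - lam * (a j - a (j - 1))) :
    ∑' j : ℤ, |Ua (j + 1) - Ua j| ≤ ∑' j : ℤ, |a (j + 1) - a j| := by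
  set f : ℤ → ℝ := fun j => |a (j + 1) - a j| with hf
  have hshift : Summable fun j : ℤ => f (j - 1) :=
    ((Equiv.subRight (1 : ℤ)).summable_iff).mpr hsum
  have hg : Summable fun j : ℤ => (1 - lam) * f j + lam * f (j - 1) :=
    (hsum.mul_left _).add (hshift.mul_left _)
  have hbound : ∀ j : ℤ, |Ua (j + 1) - Ua j| ≤ (1 - lam) * f j + lam * f (j - 1) := by
    intro j
    have e : Ua (j + 1) - Ua j = (1 - lam) * (a (j + 1) - a j) + lam * (a j - a (j - 1)) := by
      rw [hUa, hUa]
      have : j + 1 - 1 = j := by ring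
      rw [this]; ring
    rw [e]
    calc |(1 - lam) * (a (j + 1) - a j) + lam * (a j - a (j - 1))|
        ≤ |(1 - lam) * (a (j + 1) - a j)| + |lam * (a j - a (j - 1))| := abs_add_le _ _
      _ = (1 - lam) * f j + lam * f (j - 1) := by
          rw [abs_mul, abs_mul, abs_of_nonneg (by linarith), abs_of_nonneg h0]
          simp [hf]
  have hUsum : Summable fun j : ℤ => |Ua (j + 1) - Ua j| :=
    Summable.of_nonneg_of_le (fun j => abs_nonneg _) hbound hg
  calc ∑' j : ℤ, |Ua (j + 1) - Ua j|
      ≤ ∑' j : ℤ, ((1 - lam) * f j + lam * f (j - 1)) := Summable.tsum_le_tsum hbound hUsum hg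
    _ = (1 - lam) * (∑' j, f j) + lam * (∑' j, f (j - 1)) := by
        rw [Summable.tsum_add (hsum.mul_left _) (hshift.mul_left _), tsum_mul_left, tsum_mul_left]
    _ = ∑' j, f j := by
        have : ∑' j : ℤ, f (j - 1) = ∑' j, f j := (Equiv.subRight (1 : ℤ)).tsum_eq f
        rw [this]; ring
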